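/- arXiv:2305.10598 — 5 statements merged into one kernel-verified Lean document; each statement's English description precedes it below -/
import Mathlib

section
/- Let M be an n×n real symmetric irreducible matrix with eigenvalue λ of index k, and let φ be an eigenvector for λ with all entries nonzero. Then there exists a partition [n] = V_1 ⊔ ... ⊔ V_s with s ≤ k + f such that each induced subgraph G[V_ℓ] (on edges where M_{ij} ≠ 0) is connected and M_{ij} φ(i) φ(j) < 0 for all edges (i,j) within each V_ℓ; here f is the frustration index of the signed graph of M. -/
open Matrix

noncomputable def graphOf {n : ℕ} (M : Matrix (Fin n) (Fin n) ℝ) : SimpleGraph (Fin n) :=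
  SimpleGraph.fromRel (fun i j => M i j ≠ 0)

/-- The frustration index of the signed graph of `M` (sign of an edge `(i,j)` is
`-sgn (M i j)`): the minimal number of frustrated edges over all states `ε ∈ {±1}ⁿ`.
An edge `(i,j)` is frustrated for `ε` iff `-sgn(M i j) * ε i * ε j < 0`, i.e. iff
`0 < M i j * ε i * ε j`. -/
noncomputable def frustrationIndex {n : ℕ} (M : Matrix (Fin n) (Fin n) ℝ) : ℕ :=
  sInf { m : ℕ | ∃ ε : Fin n → ℝ, (∀ i, ε i = 1 ∨ ε i = -1) ∧
    m = (Finset.univ.filter (fun p : Fin n × Fin n =>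
      p.1 < p.2 ∧ 0 < M p.1 p.2 * ε p.1 * ε p.2)).card }

open Finset

/-!
Fix a state `e` attaining the frustration index `f` and a maximal subgraph `K` of the edges
satisfied both by `e` and by the signs of `φ`, subject to no `e`-frustrated edge joining two
vertices of one component of `K`; the parts are the components of `K`. Along `K` the sign of
`φ i * e i` is constant, which gives `M i j * φ i * φ j < 0` inside a part.

For the count, let `c` be constant on parts and across the `f` frustrated edges: these form a space
of dimension at least `s - f`. If `c i ≠ c j` on an edge, that edge is not frustrated, and it is not
satisfied by `φ` either: adding it to `K` would merge two parts, so by maximality a frustrated edge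
joins them. Hence `M i j * φ i * φ j ≥ 0`. By the identity
`∑ M i j φ i φ j (c i - c j)² = 2 (λ ‖φ c‖² - ⟪φ c, M (φ c)⟫)` and irreducibility, `φ c` then has
Rayleigh quotient below `λ` unless `c` is constant, which the single condition `∑ φ i² c i = 0`
excludes. A space on which the Rayleigh quotient stays below `λ` has dimension at most the number
of eigenvalues below `λ`, so `s - f - 1 ≤ k - 1`.
-/

namespace SimpleGraph

variable {V : Type*} {G : SimpleGraph V}

theorem Reachable.eq_of_forall_adj {α : Type*} {f : V → α}
    (hf : ∀ u v, G.Adj u v → f u = f v) {u v : V} (h : G.Reachable u v) : f u = f v := by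
  obtain ⟨w⟩ := h
  induction w with
  | nil => rfl
  | cons hadj _ ih => exact (hf _ _ hadj).trans ih

theorem Reachable.of_sup_edge {a b u v : V} (h : (G ⊔ edge a b).Reachable u v) :
    G.Reachable u v ∨ (G.Reachable u a ∧ G.Reachable b v) ∨
      (G.Reachable u b ∧ G.Reachable a v) := by
  obtain ⟨w⟩ := h
  induction w with
  | nil => exact Or.inl .rfl
  | cons hadj _ ih =>
    rcases hadj with hadj | hadj
    · have := hadj.reachable
      rcases ih with h | ⟨h₁, h₂⟩ | ⟨h₁, h₂⟩
      · exact .inl (this.trans h)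
      · exact .inr (.inl ⟨this.trans h₁, h₂⟩)
      · exact .inr (.inr ⟨this.trans h₁, h₂⟩)
    · rw [edge_adj] at hadj
      rcases hadj with ⟨⟨rfl, rfl⟩ | ⟨rfl, rfl⟩, -⟩ <;>
        rcases ih with h | ⟨h₁, h₂⟩ | ⟨h₁, h₂⟩ <;>
        grind [Reachable.refl, Reachable.symm, Reachable.trans]

theorem Reachable.mul_pos {t : V → ℝ} (ht : ∀ u v, G.Adj u v → 0 < t u * t v)
    (h0 : ∀ v, t v ≠ 0) {u v : V} (h : G.Reachable u v) : 0 < t u * t v := by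
  have hsign : (0 < t u) = (0 < t v) := h.eq_of_forall_adj (f := fun w => 0 < t w)
    fun a b hab => propext ⟨fun ha => pos_of_mul_pos_right (ht a b hab) ha.le,
      fun hb => pos_of_mul_pos_left (ht a b hab) hb.le⟩
  rcases (h0 u).lt_or_gt with hu | hu
  · have hv : t v < 0 := lt_of_le_of_ne (not_lt.1 (hsign ▸ hu.not_gt)) (h0 v)
    exact mul_pos_of_neg_of_neg hu hv
  · exact _root_.mul_pos hu (hsign ▸ hu)

def Separates (K R : SimpleGraph V) : Prop := ∀ ⦃u v⦄, K.Reachable u v → ¬R.Adj u v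

theorem exists_maximal_separates [Finite V] (H R : SimpleGraph V) :
    ∃ K, Maximal (fun K => K ≤ H ∧ K.Separates R) K := by
  obtain ⟨K, -, hK⟩ := Finite.exists_le_maximal (p := fun K => K ≤ H ∧ K.Separates R)
    (a := ⊥) ⟨bot_le, fun u v h => by rw [reachable_bot.1 h]; exact R.irrefl⟩
  exact ⟨K, hK⟩

theorem exists_adj_of_maximal_separates {H R K : SimpleGraph V}
    (hK : Maximal (fun K => K ≤ H ∧ K.Separates R) K) {u v : V} (huv : H.Adj u v)
    (hnot : ¬K.Reachable u v) : ∃ x y, R.Adj x y ∧ K.Reachable u x ∧ K.Reachable v y := by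
  have hlt : K < K ⊔ edge u v := lt_sup_edge _ _ _ huv.ne fun h => hnot h.reachable
  have hle : K ⊔ edge u v ≤ H := sup_le hK.1.1 ((edge_le_iff _).2 (.inr huv))
  obtain ⟨x, y, hxy, hR⟩ : ∃ x y, (K ⊔ edge u v).Reachable x y ∧ R.Adj x y := by
    by_contra! h
    exact hK.not_prop_of_gt hlt ⟨hle, fun x y hxy => h x y hxy⟩
  rcases hxy.of_sup_edge with h | ⟨hxu, hvy⟩ | ⟨hxv, huy⟩
  · exact absurd hR (hK.1.2 h)
  · exact ⟨x, y, hR, hxu.symm, hvy⟩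
  · exact ⟨y, x, hR.symm, huy, hxv.symm⟩

end SimpleGraph

theorem OrthonormalBasis.sum_dotProduct_mul_dotProduct {ι κ : Type*} [Fintype ι] [Fintype κ]
    (b : OrthonormalBasis κ ℝ (EuclideanSpace ℝ ι)) (x y : ι → ℝ) :
    ∑ i, ((b i).ofLp ⬝ᵥ x) * ((b i).ofLp ⬝ᵥ y) = x ⬝ᵥ y := by
  simpa [EuclideanSpace.inner_eq_star_dotProduct, dotProduct_comm] using
    b.sum_inner_mul_inner (WithLp.toLp 2 x) (WithLp.toLp 2 y)

namespace Matrix.IsHermitian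

theorem isSymm {ι : Type*} {A : Matrix ι ι ℝ} (hA : A.IsHermitian) : A.IsSymm := by
  simpa [IsSymm, IsHermitian, conjTranspose_eq_transpose_of_trivial] using hA

variable {ι : Type*} [Fintype ι] [DecidableEq ι] {A : Matrix ι ι ℝ}

theorem eigenvectorBasis_dotProduct_mulVec (hA : A.IsHermitian) (i : ι) (x : ι → ℝ) :
    (hA.eigenvectorBasis i).ofLp ⬝ᵥ (A *ᵥ x) =
      hA.eigenvalues i * ((hA.eigenvectorBasis i).ofLp ⬝ᵥ x) := by
  rw [dotProduct_mulVec, ← mulVec_transpose, hA.isSymm.eq, hA.mulVec_eigenvectorBasis,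
    smul_dotProduct, smul_eq_mul]

theorem dotProduct_mulVec_eq_sum (hA : A.IsHermitian) (x : ι → ℝ) :
    x ⬝ᵥ (A *ᵥ x) = ∑ i, hA.eigenvalues i * ((hA.eigenvectorBasis i).ofLp ⬝ᵥ x) ^ 2 := by
  rw [← hA.eigenvectorBasis.sum_dotProduct_mul_dotProduct]
  refine sum_congr rfl fun i _ => ?_
  rw [hA.eigenvectorBasis_dotProduct_mulVec]
  ring

theorem finrank_le_card_eigenvalues_lt (hA : A.IsHermitian) (lam : ℝ) (W : Submodule ℝ (ι → ℝ))
    (hW : ∀ x ∈ W, x ≠ 0 → x ⬝ᵥ (A *ᵥ x) < lam * (x ⬝ᵥ x)) :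
    Module.finrank ℝ W ≤ #{i | hA.eigenvalues i < lam} := by
  set b := fun i => (hA.eigenvectorBasis i).ofLp
  let B : Matrix {i // hA.eigenvalues i < lam} ι ℝ := of fun i => b i
  by_contra! hlt
  have hker : LinearMap.ker (B.mulVecLin ∘ₗ W.subtype) ≠ ⊥ :=
    LinearMap.ker_ne_bot_of_finrank_lt <| by
      rwa [Module.finrank_fintype_fun_eq_card, Fintype.card_subtype]
  obtain ⟨⟨x, hxW⟩, hx, hx0⟩ := Submodule.exists_mem_ne_zero_of_ne_bot hker
  have hBx : ∀ i, hA.eigenvalues i < lam → b i ⬝ᵥ x = 0 := fun i hi =>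
    congrFun (LinearMap.mem_ker.1 hx) ⟨i, hi⟩
  refine (hW x hxW (by simpa using hx0)).not_ge ?_
  calc lam * (x ⬝ᵥ x) = ∑ i, lam * (b i ⬝ᵥ x) ^ 2 := by
        rw [← hA.eigenvectorBasis.sum_dotProduct_mul_dotProduct, mul_sum]
        simp only [sq, b]
    _ ≤ ∑ i, hA.eigenvalues i * (b i ⬝ᵥ x) ^ 2 := by
        refine sum_le_sum fun i _ => ?_
        rcases lt_or_ge (hA.eigenvalues i) lam with hi | hi
        · simp [hBx i hi]
        · exact mul_le_mul_of_nonneg_right hi (sq_nonneg _)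
    _ = x ⬝ᵥ (A *ᵥ x) := (hA.dotProduct_mulVec_eq_sum x).symm

end Matrix.IsHermitian

namespace Matrix

variable {ι : Type*} [Fintype ι] {A : Matrix ι ι ℝ} {lam : ℝ} {φ : ι → ℝ}

theorem IsSymm.sum_mul_sq_sub_eq (hA : A.IsSymm) (heig : A *ᵥ φ = lam • φ) (c : ι → ℝ) :
    ∑ i, ∑ j, A i j * φ i * φ j * (c i - c j) ^ 2 =
      2 * (lam * ((φ * c) ⬝ᵥ (φ * c)) - (φ * c) ⬝ᵥ (A *ᵥ (φ * c))) := by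
  have hrow : ∀ i, ∑ j, A i j * φ j = lam * φ i := fun i => by
    simpa [mulVec, dotProduct] using congrFun heig i
  have hcol : ∀ j, ∑ i, A i j * φ i = lam * φ j := fun j => by
    simpa only [hA.apply] using hrow j
  have hexpand : ∀ i j, A i j * φ i * φ j * (c i - c j) ^ 2 = c i ^ 2 * φ i * (A i j * φ j) +
      c j ^ 2 * φ j * (A i j * φ i) - 2 * ((φ i * c i) * (A i j * (φ j * c j))) := by
    intro i j; ring
  simp_rw [hexpand, sum_sub_distrib, sum_add_distrib, ← mul_sum]
  rw [sum_comm (f := fun i j => c j ^ 2 * φ j * (A i j * φ i))]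
  simp_rw [← mul_sum, hrow, hcol]
  have hnorm : ∑ i, c i ^ 2 * φ i * (lam * φ i) = lam * ((φ * c) ⬝ᵥ (φ * c)) := by
    simp only [dotProduct, Pi.mul_apply, mul_sum]
    exact sum_congr rfl fun i _ => by ring
  have hform : ∑ i, φ i * c i * ∑ j, A i j * (φ j * c j) = (φ * c) ⬝ᵥ (A *ᵥ (φ * c)) := rfl
  rw [hnorm, hform]
  ring

theorem IsSymm.dotProduct_mulVec_lt_of_sum_eq_zero (hA : A.IsSymm)
    (hconn : (SimpleGraph.fromRel fun i j => A i j ≠ 0).Connected) (heig : A *ᵥ φ = lam • φ)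
    (hφ : ∀ i, φ i ≠ 0) {c : ι → ℝ} (hc : ∀ i j, c i ≠ c j → 0 ≤ A i j * φ i * φ j)
    (hmean : ∑ i, φ i ^ 2 * c i = 0) (hc0 : c ≠ 0) :
    (φ * c) ⬝ᵥ (A *ᵥ (φ * c)) < lam * ((φ * c) ⬝ᵥ (φ * c)) := by
  have hterm : ∀ i j, 0 ≤ A i j * φ i * φ j * (c i - c j) ^ 2 := fun i j => by
    by_cases h : c i = c j
    · simp [h]
    · exact mul_nonneg (hc i j h) (sq_nonneg _)
  suffices 0 < ∑ i, ∑ j, A i j * φ i * φ j * (c i - c j) ^ 2 by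
    linarith [hA.sum_mul_sq_sub_eq heig c]
  by_contra! hle
  have hzero : ∀ i j, A i j * φ i * φ j * (c i - c j) ^ 2 = 0 := by
    have hsum := le_antisymm hle (sum_nonneg fun i _ => sum_nonneg fun j _ => hterm i j)
    intro i j
    rw [sum_eq_zero_iff_of_nonneg fun i _ => sum_nonneg fun j _ => hterm i j] at hsum
    exact (sum_eq_zero_iff_of_nonneg fun j _ => hterm i j).1 (hsum i (mem_univ _)) j (mem_univ _)
  have hadj : ∀ i j, (SimpleGraph.fromRel fun i j => A i j ≠ 0).Adj i j → c i = c j := by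
    intro i j hij
    by_contra hcij
    have hAij : A i j ≠ 0 := by
      obtain ⟨-, h | h⟩ := (SimpleGraph.fromRel_adj _ _ _).1 hij
      exacts [h, by rwa [hA.apply i j] at h]
    exact mul_ne_zero (mul_ne_zero (mul_ne_zero hAij (hφ i)) (hφ j))
      (pow_ne_zero 2 (sub_ne_zero.2 hcij)) (hzero i j)
  refine hc0 (funext fun i => ?_)
  have hconst : ∀ j, c j = c i := fun j =>
    SimpleGraph.Reachable.eq_of_forall_adj hadj (hconn.preconnected j i)
  have hpos : 0 < ∑ j, φ j ^ 2 :=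
    sum_pos' (fun j _ => sq_nonneg _) ⟨i, mem_univ _, pow_two_pos_of_ne_zero (hφ i)⟩
  have hsum : (∑ j, φ j ^ 2) * c i = 0 := by
    rw [sum_mul, ← hmean]
    exact sum_congr rfl fun j _ => by rw [hconst j]
  exact (mul_eq_zero.1 hsum).resolve_left hpos.ne'

theorem IsHermitian.finrank_le_card_eigenvalues_lt_add_one [DecidableEq ι] (hA : A.IsHermitian)
    (hconn : (SimpleGraph.fromRel fun i j => A i j ≠ 0).Connected) (heig : A *ᵥ φ = lam • φ)
    (hφ : ∀ i, φ i ≠ 0) (V : Submodule ℝ (ι → ℝ))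
    (hV : ∀ c ∈ V, ∀ i j, c i ≠ c j → 0 ≤ A i j * φ i * φ j) :
    Module.finrank ℝ V ≤ #{i | hA.eigenvalues i < lam} + 1 := by
  let μ : V →ₗ[ℝ] ℝ := (∑ i, φ i ^ 2 • LinearMap.proj i) ∘ₗ V.subtype
  let D : V →ₗ[ℝ] (ι → ℝ) := LinearMap.mulLeft ℝ φ ∘ₗ V.subtype
  have hD : Function.Injective D := fun c d hcd => Subtype.ext <| funext fun i =>
    mul_left_cancel₀ (hφ i) (congrFun hcd i)
  have hrange : Module.finrank ℝ (LinearMap.range μ) ≤ 1 :=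
    (Submodule.finrank_le _).trans (Module.finrank_self ℝ).le
  have hker : Module.finrank ℝ (LinearMap.ker μ) ≤ #{i | hA.eigenvalues i < lam} := by
    rw [(Submodule.equivMapOfInjective D hD _).finrank_eq]
    refine hA.finrank_le_card_eigenvalues_lt lam _ ?_
    rintro _ ⟨c, hc, rfl⟩ hx
    refine hA.isSymm.dotProduct_mulVec_lt_of_sum_eq_zero hconn heig hφ (hV c c.2) ?_ ?_
    · simpa [μ] using hc
    · exact fun h => hx (by simp [D, show (c : ι → ℝ) = 0 from h])
  have := μ.finrank_range_add_finrank_ker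
  omega

theorem IsHermitian.card_le_card_eigenvalues_lt_add_card [DecidableEq ι] {κ : Type*} [Fintype κ]
    (hA : A.IsHermitian) (hconn : (SimpleGraph.fromRel fun i j => A i j ≠ 0).Connected)
    (heig : A *ᵥ φ = lam • φ) (hφ : ∀ i, φ i ≠ 0) (P : ι → κ) (hP : Function.Surjective P)
    (F : Finset (ι × ι))
    (hsep : ∀ a : κ → ℝ, (∀ p ∈ F, a (P p.1) = a (P p.2)) →
      ∀ i j, a (P i) ≠ a (P j) → 0 ≤ A i j * φ i * φ j) :
    Fintype.card κ ≤ #{i | hA.eigenvalues i < lam} + 1 + #F := by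
  let Ψ : (κ → ℝ) →ₗ[ℝ] (F → ℝ) :=
    LinearMap.pi fun p => (LinearMap.proj (P p.1.1) : (κ → ℝ) →ₗ[ℝ] ℝ) - LinearMap.proj (P p.1.2)
  have hrange : Module.finrank ℝ (LinearMap.range Ψ) ≤ #F :=
    (Submodule.finrank_le _).trans (by simp)
  have hker : Module.finrank ℝ (LinearMap.ker Ψ) ≤ #{i | hA.eigenvalues i < lam} + 1 := by
    rw [(Submodule.equivMapOfInjective _
      (LinearMap.funLeft_injective_of_surjective ℝ ℝ P hP) _).finrank_eq]
    refine hA.finrank_le_card_eigenvalues_lt_add_one hconn heig hφ _ ?_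
    rintro _ ⟨a, ha, rfl⟩
    exact hsep a fun p hp => sub_eq_zero.1 (congrFun ha ⟨p, hp⟩)
  have := Ψ.finrank_range_add_finrank_ker
  rw [Module.finrank_fintype_fun_eq_card] at this
  omega

end Matrix

section SignedGraph

variable {n : ℕ} {M : Matrix (Fin n) (Fin n) ℝ}

def satisfiedGraph (M : Matrix (Fin n) (Fin n) ℝ) (x : Fin n → ℝ) : SimpleGraph (Fin n) :=
  SimpleGraph.fromRel fun i j => M i j * x i * x j < 0

def frustratedGraph (M : Matrix (Fin n) (Fin n) ℝ) (x : Fin n → ℝ) : SimpleGraph (Fin n) :=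
  SimpleGraph.fromRel fun i j => 0 < M i j * x i * x j

noncomputable def frustratedEdges (M : Matrix (Fin n) (Fin n) ℝ) (x : Fin n → ℝ) :
    Finset (Fin n × Fin n) :=
  {p | p.1 < p.2 ∧ 0 < M p.1 p.2 * x p.1 * x p.2}

theorem exists_frustrationIndex_eq (M : Matrix (Fin n) (Fin n) ℝ) :
    ∃ ε : Fin n → ℝ, (∀ i, ε i = 1 ∨ ε i = -1) ∧ frustrationIndex M = #(frustratedEdges M ε) :=
  Nat.sInf_mem
    (s := {m | ∃ ε : Fin n → ℝ, (∀ i, ε i = 1 ∨ ε i = -1) ∧ m = #(frustratedEdges M ε)})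
    ⟨_, 1, fun _ => .inl rfl, rfl⟩

variable {x : Fin n → ℝ} {i j : Fin n}

theorem Matrix.IsSymm.apply_mul_mul_swap (hM : M.IsSymm) :
    M j i * x j * x i = M i j * x i * x j := by
  rw [hM.apply i j]; ring

theorem satisfiedGraph_adj (hM : M.IsSymm) :
    (satisfiedGraph M x).Adj i j ↔ i ≠ j ∧ M i j * x i * x j < 0 := by
  rw [satisfiedGraph, SimpleGraph.fromRel_adj, hM.apply_mul_mul_swap, or_self]

theorem frustratedGraph_adj (hM : M.IsSymm) :
    (frustratedGraph M x).Adj i j ↔ i ≠ j ∧ 0 < M i j * x i * x j := by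
  rw [frustratedGraph, SimpleGraph.fromRel_adj, hM.apply_mul_mul_swap, or_self]

theorem mem_frustratedEdges_of_adj (hM : M.IsSymm) (h : (frustratedGraph M x).Adj i j) :
    (i, j) ∈ frustratedEdges M x ∨ (j, i) ∈ frustratedEdges M x := by
  rw [frustratedGraph_adj hM] at h
  rcases h.1.lt_or_gt with hij | hij
  · exact .inl (by simp [frustratedEdges, hij, h.2])
  · exact .inr (by simp [frustratedEdges, hij, hM.apply_mul_mul_swap, h.2])

theorem mul_mul_neg_of_not_frustrated (hM : M.IsSymm) (hx : ∀ i, x i ≠ 0) (hij : i ≠ j)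
    (hM0 : M i j ≠ 0) (hfr : ¬(frustratedGraph M x).Adj i j) : M i j * x i * x j < 0 :=
  lt_of_le_of_ne (not_lt.1 fun h => hfr ((frustratedGraph_adj hM).2 ⟨hij, h⟩))
    (mul_ne_zero (mul_ne_zero hM0 (hx i)) (hx j))

theorem satisfiedGraph_le_graphOf (M : Matrix (Fin n) (Fin n) ℝ) (x : Fin n → ℝ) :
    satisfiedGraph M x ≤ graphOf M := by
  intro i j h
  refine ⟨h.1, h.2.imp ?_ ?_⟩ <;> rintro h hM0 <;> simp [hM0] at h

variable {φ e : Fin n → ℝ} {K : SimpleGraph (Fin n)}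

theorem mul_mul_neg_of_reachable (hM : M.IsSymm) (hφ : ∀ i, φ i ≠ 0) (he : ∀ i, e i ≠ 0)
    (hKH : K ≤ satisfiedGraph M e ⊓ satisfiedGraph M φ)
    (hKF : K.Separates (frustratedGraph M e)) (hij : K.Reachable i j) (hne : i ≠ j)
    (hM0 : M i j ≠ 0) : M i j * φ i * φ j < 0 := by
  have hsign : 0 < (φ i * e i) * (φ j * e j) := by
    refine hij.mul_pos (t := fun v => φ v * e v) (fun u v huv => ?_)
      fun v => mul_ne_zero (hφ v) (he v)
    have hu := ((satisfiedGraph_adj hM).1 (hKH huv).1).2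
    have hv := ((satisfiedGraph_adj hM).1 (hKH huv).2).2
    nlinarith [mul_pos_of_neg_of_neg hu hv, sq_nonneg (M u v)]
  have hfr := mul_mul_neg_of_not_frustrated hM he hne hM0 (hKF hij)
  nlinarith [sq_nonneg (e i * e j)]

theorem mul_mul_nonneg_of_maximal_separates (hM : M.IsSymm) (he : ∀ i, e i ≠ 0)
    (hK : Maximal (fun K => K ≤ satisfiedGraph M e ⊓ satisfiedGraph M φ ∧
      K.Separates (frustratedGraph M e)) K)
    {c : Fin n → ℝ} (hcK : ∀ u v, K.Reachable u v → c u = c v)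
    (hcF : ∀ p ∈ frustratedEdges M e, c p.1 = c p.2) (hij : c i ≠ c j) :
    0 ≤ M i j * φ i * φ j := by
  have hfr : ∀ u v, (frustratedGraph M e).Adj u v → c u = c v := fun u v huv =>
    (mem_frustratedEdges_of_adj hM huv).elim (hcF _) fun h => (hcF _ h).symm
  by_contra! hneg
  have hne : i ≠ j := fun h => hij (h ▸ rfl)
  have hM0 : M i j ≠ 0 := fun h => by simp [h] at hneg
  have hee := mul_mul_neg_of_not_frustrated hM he hne hM0 fun h => hij (hfr i j h)
  have hH : (satisfiedGraph M e ⊓ satisfiedGraph M φ).Adj i j :=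
    ⟨(satisfiedGraph_adj hM).2 ⟨hne, hee⟩, (satisfiedGraph_adj hM).2 ⟨hne, hneg⟩⟩
  obtain ⟨u, v, huv, hiu, hjv⟩ :=
    SimpleGraph.exists_adj_of_maximal_separates hK hH fun h => hij (hcK i j h)
  exact hij ((hcK _ _ hiu).trans ((hfr u v huv).trans (hcK _ _ hjv).symm))

theorem exists_partition_card_le {lam : ℝ} (hM : M.IsHermitian) (hirr : (graphOf M).Connected)
    (heig : M *ᵥ φ = lam • φ) (hφ : ∀ i, φ i ≠ 0) (he : ∀ i, e i ≠ 0) :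
    ∃ s, s ≤ #{i | hM.eigenvalues i < lam} + 1 + #(frustratedEdges M e) ∧
      ∃ P : Fin n → Fin s, ∀ ℓ, ((graphOf M).induce (P ⁻¹' {ℓ})).Connected ∧
        ∀ i j, P i = ℓ → P j = ℓ → i ≠ j → M i j ≠ 0 → M i j * φ i * φ j < 0 := by
  have hS := hM.isSymm
  obtain ⟨K, hK⟩ := SimpleGraph.exists_maximal_separates
    (satisfiedGraph M e ⊓ satisfiedGraph M φ) (frustratedGraph M e)
  have hKG : K ≤ graphOf M := hK.1.1.trans (inf_le_left.trans (satisfiedGraph_le_graphOf M e))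
  let _ : Fintype K.ConnectedComponent := Fintype.ofFinite _
  let E := Fintype.equivFin K.ConnectedComponent
  let P : Fin n → Fin _ := E ∘ K.connectedComponentMk
  have hP : ∀ i j, P i = P j ↔ K.Reachable i j := fun i j =>
    E.injective.eq_iff.trans SimpleGraph.ConnectedComponent.eq
  refine ⟨_, ?_, P, fun ℓ => ⟨?_, fun i j hi hj => mul_mul_neg_of_reachable hS hφ he hK.1.1
    hK.1.2 ((hP i j).1 (hi.trans hj.symm))⟩⟩
  · exact hM.card_le_card_eigenvalues_lt_add_card hirr heig hφ K.connectedComponentMk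
      (fun C => C.exists_rep) _ fun a ha i j hij => mul_mul_nonneg_of_maximal_separates hS he hK
        (c := a ∘ K.connectedComponentMk)
        (fun u v h => congrArg a (SimpleGraph.ConnectedComponent.sound h)) ha hij
  · have hfiber : P ⁻¹' {ℓ} = (E.symm ℓ).supp := by
      ext i
      simp [P, SimpleGraph.ConnectedComponent.mem_supp_iff, Equiv.eq_symm_apply]
    rw [hfiber]
    exact (E.symm ℓ).connected_toSimpleGraph.mono fun a b h => hKG h

end SignedGraph

theorem stmt1_general {n : ℕ} {M : Matrix (Fin n) (Fin n) ℝ}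
    (hM : M.IsHermitian) (hirr : (graphOf M).Connected)
    (lam : ℝ) (φ : Fin n → ℝ) (hφ : ∀ i, φ i ≠ 0)
    (heig : M.mulVec φ = lam • φ)
    (k : ℕ)
    (hk : k = (Finset.univ.filter (fun i => hM.eigenvalues i < lam)).card + 1) :
    ∃ s : ℕ, s ≤ k + frustrationIndex M ∧
      ∃ P : Fin n → Fin s, ∀ ℓ : Fin s,
        ((graphOf M).induce (P ⁻¹' {ℓ})).Connected ∧
        ∀ i j, P i = ℓ → P j = ℓ → i ≠ j → M i j ≠ 0 → M i j * φ i * φ j < 0 := by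
  obtain ⟨ε, hε, hf⟩ := exists_frustrationIndex_eq M
  obtain ⟨s, hs, hP⟩ := exists_partition_card_le (e := ε) hM hirr heig hφ fun i => by
    rcases hε i with h | h <;> simp [h]
  exact ⟨s, by rw [hk, hf]; exact hs, hP⟩

theorem stmt1 {n : ℕ} (hn : 0 < n) {M : Matrix (Fin n) (Fin n) ℝ}
    (hM : M.IsHermitian) (hirr : (graphOf M).Connected)
    (lam : ℝ) (φ : Fin n → ℝ) (hφ : ∀ i, φ i ≠ 0)
    (heig : M.mulVec φ = lam • φ)
    (k : ℕ)
    (hk : k = (Finset.univ.filter (fun i => hM.eigenvalues i < lam)).card + 1) :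
    ∃ s : ℕ, s ≤ k + frustrationIndex M ∧
      ∃ P : Fin n → Fin s, ∀ ℓ : Fin s,
        ((graphOf M).induce (P ⁻¹' {ℓ})).Connected ∧
        ∀ i j, P i = ℓ → P j = ℓ → i ≠ j → M i j ≠ 0 → M i j * φ i * φ j < 0 :=
  stmt1_general hM hirr lam φ hφ heig k hk
end

section
/- Let M be an n×n real symmetric matrix with eigenpair (λ, φ) where φ has no zero entries. Let D_φ be the diagonal matrix with diagonal φ. Then B = D_φ (M - λI) D_φ is a symmetric matrix with zero row sums, and if λ has index k and multiplicity r among the eigenvalues of M, then B has exactly k-1 negative eigenvalues and n-k-r+1 positive eigenvalues. -/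
/-!
Since `M φ = λ φ`, the vector `φ = D_φ 𝟙` lies in the kernel of `M - λ I`, so `B 𝟙 = 0`. As
`D_φ` is invertible, `B` is congruent to `M - λ I`, which in turn is congruent (through an
orthonormal eigenbasis of `M`) to the diagonal matrix of the `μᵢ - λ`, where the `μᵢ` are the
eigenvalues of `M`. By Sylvester's law of inertia, in the form
`QuadraticForm.sigPos_of_equiv_weightedSumSquares`, `B` has as many negative (positive)
eigenvalues as there are `μᵢ < λ` (`μᵢ > λ`), that is `k - 1` (`n - (k - 1) - r`).
-/

open Matrix

/-- `B = D_φ (M - λ I) D_φ` where `D_φ` is the diagonal matrix with diagonal `φ`. -/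
noncomputable def Bmat {n : ℕ} (M : Matrix (Fin n) (Fin n) ℝ) (lam : ℝ) (φ : Fin n → ℝ) :
    Matrix (Fin n) (Fin n) ℝ :=
  Matrix.diagonal φ * (M - lam • (1 : Matrix (Fin n) (Fin n) ℝ)) * Matrix.diagonal φ

open Finset QuadraticMap QuadraticForm

namespace Matrix

variable {ι : Type*} [Fintype ι] [DecidableEq ι]

section CommRing

variable {R : Type*} [CommRing R]

theorem toQuadraticForm'_apply (A : Matrix ι ι R) (x : ι → R) :
    A.toQuadraticForm' x = x ⬝ᵥ A *ᵥ x :=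
  toLinearMap₂'_apply' A x x

theorem toQuadraticForm'_diagonal (w : ι → R) :
    (diagonal w).toQuadraticForm' = weightedSumSquares R w := by
  ext x
  simp [toQuadraticForm'_apply, weightedSumSquares_apply, dotProduct, mulVec_diagonal,
    mul_left_comm]

theorem toQuadraticForm'_transpose_mul_mul (A C : Matrix ι ι R) :
    (Cᵀ * A * C).toQuadraticForm' = A.toQuadraticForm'.comp (toLin' C) := by
  ext x
  simp [toQuadraticForm'_apply, ← mulVec_mulVec, dotProduct_mulVec, vecMul_transpose]

theorem equivalent_toQuadraticForm'_transpose_mul_mul (A : Matrix ι ι R) {C : Matrix ι ι R}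
    (hC : IsUnit C) : (Cᵀ * A * C).toQuadraticForm'.Equivalent A.toQuadraticForm' := by
  have := hC.invertible
  rw [toQuadraticForm'_transpose_mul_mul]
  exact ⟨(isometryEquivOfCompLinearEquiv _ (C.toLinearEquiv' this)).symm⟩

end CommRing

section LinearOrderedField

variable {𝕜 : Type*} [Field 𝕜] [LinearOrder 𝕜] [IsStrictOrderedRing 𝕜]

theorem sigPos_toQuadraticForm'_of_transpose_mul_mul_eq_diagonal {A C : Matrix ι ι 𝕜}
    (hC : IsUnit C) {d : ι → 𝕜} (h : Cᵀ * A * C = diagonal d) :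
    sigPos A.toQuadraticForm' = #{i | 0 < d i} := by
  rw [← (equivalent_toQuadraticForm'_transpose_mul_mul A hC).sigPos_eq, h,
    toQuadraticForm'_diagonal, sigPos_weightedSumSquares, Set.ncard_eq_toFinset_card',
    Set.toFinset_ofPred]

theorem sigNeg_toQuadraticForm'_of_transpose_mul_mul_eq_diagonal {A C : Matrix ι ι 𝕜}
    (hC : IsUnit C) {d : ι → 𝕜} (h : Cᵀ * A * C = diagonal d) :
    sigNeg A.toQuadraticForm' = #{i | d i < 0} := by
  rw [← (equivalent_toQuadraticForm'_transpose_mul_mul A hC).sigNeg_eq, h,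
    toQuadraticForm'_diagonal, sigNeg_weightedSumSquares, Set.ncard_eq_toFinset_card',
    Set.toFinset_ofPred]

end LinearOrderedField

namespace IsHermitian

variable {A : Matrix ι ι ℝ} (hA : A.IsHermitian)
include hA

theorem transpose_eigenvectorUnitary_mul_mul :
    (hA.eigenvectorUnitary : Matrix ι ι ℝ)ᵀ * A * hA.eigenvectorUnitary =
      diagonal hA.eigenvalues := by
  simpa [Unitary.conjStarAlgAut_star_apply, star_eq_conjTranspose] using
    hA.conjStarAlgAut_star_eigenvectorUnitary

theorem isUnit_eigenvectorUnitary : IsUnit (hA.eigenvectorUnitary : Matrix ι ι ℝ) :=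
  (Unitary.toUnits hA.eigenvectorUnitary).isUnit

theorem transpose_eigenvectorUnitary_mul_sub_smul_one_mul (c : ℝ) :
    (hA.eigenvectorUnitary : Matrix ι ι ℝ)ᵀ * (A - c • 1) * hA.eigenvectorUnitary =
      diagonal (hA.eigenvalues - Function.const ι c) := by
  have hU : (hA.eigenvectorUnitary : Matrix ι ι ℝ)ᵀ * hA.eigenvectorUnitary = 1 := by
    simpa [star_eq_conjTranspose] using Unitary.coe_star_mul_self hA.eigenvectorUnitary
  rw [Matrix.mul_sub, Matrix.sub_mul, hA.transpose_eigenvectorUnitary_mul_mul, Matrix.mul_smul,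
    Matrix.smul_mul, Matrix.mul_one, hU, smul_one_eq_diagonal, diagonal_sub]
  rfl

theorem sigPos_toQuadraticForm'_sub_smul_one (c : ℝ) :
    sigPos (A - c • 1).toQuadraticForm' = #{i | c < hA.eigenvalues i} := by
  simpa using sigPos_toQuadraticForm'_of_transpose_mul_mul_eq_diagonal hA.isUnit_eigenvectorUnitary
    (hA.transpose_eigenvectorUnitary_mul_sub_smul_one_mul c)

theorem sigNeg_toQuadraticForm'_sub_smul_one (c : ℝ) :
    sigNeg (A - c • 1).toQuadraticForm' = #{i | hA.eigenvalues i < c} := by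
  simpa using sigNeg_toQuadraticForm'_of_transpose_mul_mul_eq_diagonal hA.isUnit_eigenvectorUnitary
    (hA.transpose_eigenvectorUnitary_mul_sub_smul_one_mul c)

theorem sigPos_toQuadraticForm' :
    sigPos A.toQuadraticForm' = #{i | 0 < hA.eigenvalues i} := by
  simpa using hA.sigPos_toQuadraticForm'_sub_smul_one 0

theorem sigNeg_toQuadraticForm' :
    sigNeg A.toQuadraticForm' = #{i | hA.eigenvalues i < 0} := by
  simpa using hA.sigNeg_toQuadraticForm'_sub_smul_one 0

end IsHermitian

end Matrix

theorem Finset.card_filter_lt_add_card_filter_eq_add_card_filter_gt {ι α : Type*} [Fintype ι]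
    [LinearOrder α] (f : ι → α) (a : α) :
    #{i | f i < a} + #{i | f i = a} + #{i | a < f i} = Fintype.card ι := by
  classical
  rw [← card_union_of_disjoint, ← card_union_of_disjoint, ← card_univ]
  · congr 1
    ext i
    simpa [or_assoc] using lt_trichotomy (f i) a
  all_goals
    simp only [disjoint_left, mem_union, mem_filter, mem_univ, true_and]
    grind

section Bmat

variable {n : ℕ} {M : Matrix (Fin n) (Fin n) ℝ} {lam : ℝ} {φ : Fin n → ℝ}

theorem Bmat_eq_transpose_mul_mul (M : Matrix (Fin n) (Fin n) ℝ) (lam : ℝ) (φ : Fin n → ℝ) :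
    Bmat M lam φ = (diagonal φ)ᵀ * (M - lam • 1) * diagonal φ := by
  rw [Bmat, diagonal_transpose]

theorem isHermitian_Bmat (hM : M.IsHermitian) (lam : ℝ) (φ : Fin n → ℝ) :
    (Bmat M lam φ).IsHermitian := by
  have hA : (M - lam • 1 : Matrix (Fin n) (Fin n) ℝ).IsHermitian :=
    hM.sub (isHermitian_one.smul (IsSelfAdjoint.all lam))
  simpa [Bmat] using isHermitian_mul_mul_conjTranspose (diagonal φ) hA

theorem Bmat_mulVec_one (heig : M *ᵥ φ = lam • φ) : Bmat M lam φ *ᵥ 1 = 0 := by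
  have hφ : diagonal φ *ᵥ 1 = φ := by
    ext i
    simp [mulVec_diagonal]
  rw [Bmat, ← mulVec_mulVec, ← mulVec_mulVec, hφ, sub_mulVec, heig, smul_mulVec, one_mulVec,
    sub_self, mulVec_zero]

theorem sum_Bmat_row_eq_zero (heig : M *ᵥ φ = lam • φ) (i : Fin n) :
    ∑ j, Bmat M lam φ i j = 0 := by
  simpa [mulVec, dotProduct] using congrFun (Bmat_mulVec_one heig) i

end Bmat

theorem stmt3 {n : ℕ} {M : Matrix (Fin n) (Fin n) ℝ} (hM : M.IsHermitian)
    (lam : ℝ) (φ : Fin n → ℝ) (hφ : ∀ i, φ i ≠ 0)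
    (heig : M.mulVec φ = lam • φ)
    (k r : ℕ)
    (hk : k = (Finset.univ.filter (fun i => hM.eigenvalues i < lam)).card + 1)
    (hr : r = (Finset.univ.filter (fun i => hM.eigenvalues i = lam)).card) :
    (∀ i, ∑ j, Bmat M lam φ i j = 0) ∧
    ∃ hB : (Bmat M lam φ).IsHermitian,
      ((Finset.univ.filter (fun i => hB.eigenvalues i < 0)).card : ℤ) = (k : ℤ) - 1 ∧
      ((Finset.univ.filter (fun i => 0 < hB.eigenvalues i)).card : ℤ)
        = (n : ℤ) - k - r + 1 := by
  subst hk hr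
  have hD : IsUnit (diagonal φ) := isUnit_diagonal.2 (Pi.isUnit_iff.2 fun i => (hφ i).isUnit)
  have hBA : (Bmat M lam φ).toQuadraticForm'.Equivalent (M - lam • 1).toQuadraticForm' := by
    rw [Bmat_eq_transpose_mul_mul]
    exact equivalent_toQuadraticForm'_transpose_mul_mul _ hD
  have hB := isHermitian_Bmat hM lam φ
  have hcount := card_filter_lt_add_card_filter_eq_add_card_filter_gt hM.eigenvalues lam
  rw [Fintype.card_fin] at hcount
  refine ⟨sum_Bmat_row_eq_zero heig, hB, ?_, ?_⟩
  · rw [← hB.sigNeg_toQuadraticForm', hBA.sigNeg_eq, hM.sigNeg_toQuadraticForm'_sub_smul_one]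
    push_cast
    ring
  · rw [← hB.sigPos_toQuadraticForm', hBA.sigPos_eq, hM.sigPos_toQuadraticForm'_sub_smul_one]
    omega
end

section
/- Let M be an n×n symmetric matrix with eigenvalue λ, and let φ ∈ ℝ^n be a unit eigenvector for λ that is nowhere zero. Let V_1,...,V_t be a partition of [n], and for α ∈ ℝ^t define x_α(i) = α_p φ(i) for i ∈ V_p. If x_α is a unit vector, then x_α^T M x_α = λ - Σ_{(i,j) ∈ E} [M_{ij} φ(i) φ(j)] (α(i) - α(j))², where the sum is over edges of the graph of M (each unordered pair counted once) and α(i) = α_p for i ∈ V_p. -/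
open Matrix

theorem stmt7 {n t : ℕ} {M : Matrix (Fin n) (Fin n) ℝ} (hM : M.IsHermitian)
    (lam : ℝ) (φ : Fin n → ℝ) (hφ0 : ∀ i, φ i ≠ 0)
    (heig : M.mulVec φ = lam • φ) (hunit : ∑ i, φ i ^ 2 = 1)
    (P : Fin n → Fin t) (α : Fin t → ℝ)
    (x : Fin n → ℝ) (hx : ∀ i, x i = α (P i) * φ i)
    (hxunit : ∑ i, x i ^ 2 = 1) :
    x ⬝ᵥ M.mulVec x = lam - ∑ p ∈ Finset.univ.filter
        (fun p : Fin n × Fin n => p.1 < p.2 ∧ M p.1 p.2 ≠ 0),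
      M p.1 p.2 * φ p.1 * φ p.2 * (α (P p.1) - α (P p.2)) ^ 2 := by
  classical
  have hMs : ∀ i j : Fin n, M i j = M j i := fun i j => by
    simpa using (congrFun (congrFun hM i) j).symm
  have heig' : ∀ i, ∑ j, M i j * φ j = lam * φ i := fun i => by
    have := congrFun heig i
    simpa [Matrix.mulVec, dotProduct] using this
  set F : Fin n × Fin n → ℝ := fun p =>
    M p.1 p.2 * φ p.1 * φ p.2 * (α (P p.1) - α (P p.2)) ^ 2 with hF
  -- Claim 2: full pair sum = 2 * filtered sum
  have hTfull : ∑ i, ∑ j, F (i, j) = 2 * ∑ p ∈ Finset.univ.filter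
      (fun p : Fin n × Fin n => p.1 < p.2 ∧ M p.1 p.2 ≠ 0), F p := by
    have hsum : ∑ p : Fin n × Fin n, F p = ∑ i, ∑ j, F (i, j) :=
      Fintype.sum_prod_type F
    have hsplit : ∑ p : Fin n × Fin n, F p =
        (∑ p ∈ Finset.univ.filter (fun p : Fin n × Fin n => p.1 < p.2), F p) +
        (∑ p ∈ Finset.univ.filter (fun p : Fin n × Fin n => ¬ p.1 < p.2), F p) :=
      (Finset.sum_filter_add_sum_filter_not _ _ _).symm
    have hge : ∑ p ∈ Finset.univ.filter (fun p : Fin n × Fin n => ¬ p.1 < p.2), F p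
        = ∑ p ∈ Finset.univ.filter (fun p : Fin n × Fin n => p.2 < p.1), F p := by
      refine (Finset.sum_subset ?_ ?_).symm
      · intro p hp
        simp only [Finset.mem_filter, Finset.mem_univ, true_and] at hp ⊢
        exact fun h => absurd (lt_trans hp h) (lt_irrefl _)
      · intro p hp hnp
        simp only [Finset.mem_filter, Finset.mem_univ, true_and] at hp hnp
        have : p.1 = p.2 := le_antisymm (le_of_not_gt hnp) (le_of_not_gt hp)
        simp [hF, this]
    have hswap : ∑ p ∈ Finset.univ.filter (fun p : Fin n × Fin n => p.2 < p.1), F p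
        = ∑ p ∈ Finset.univ.filter (fun p : Fin n × Fin n => p.1 < p.2), F p := by
      refine Finset.sum_nbij' (fun p => Prod.swap p) (fun p => Prod.swap p) ?_ ?_ ?_ ?_ ?_
      · intro p hp; simp only [Finset.mem_filter, Finset.mem_univ, true_and] at hp ⊢; exact hp
      · intro p hp; simp only [Finset.mem_filter, Finset.mem_univ, true_and] at hp ⊢; exact hp
      · intro p _; simp
      · intro p _; simp
      · intro p _
        simp only [hF, Prod.fst_swap, Prod.snd_swap]
        rw [hMs p.2 p.1]; ring
    have hfilt : ∑ p ∈ Finset.univ.filter (fun p : Fin n × Fin n => p.1 < p.2), F p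
        = ∑ p ∈ Finset.univ.filter
            (fun p : Fin n × Fin n => p.1 < p.2 ∧ M p.1 p.2 ≠ 0), F p := by
      refine (Finset.sum_subset ?_ ?_).symm
      · intro p hp
        simp only [Finset.mem_filter, Finset.mem_univ, true_and] at hp ⊢
        exact hp.1
      · intro p hp hnp
        simp only [Finset.mem_filter, Finset.mem_univ, true_and, not_and] at hp hnp
        have : M p.1 p.2 = 0 := by
          by_contra h; exact (hnp hp) h
        simp [hF, this]
    rw [← hsum, hsplit, hge, hswap, hfilt]; ring
  -- Claim 1
  have hdot : x ⬝ᵥ M.mulVec x = ∑ i, ∑ j, M i j * x i * x j := by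
    simp only [dotProduct, Matrix.mulVec, Finset.mul_sum]
    refine Finset.sum_congr rfl fun i _ => Finset.sum_congr rfl fun j _ => by ring
  have hA : ∑ i, ∑ j, α (P i) ^ 2 * (M i j * φ i * φ j) = lam := by
    have : ∀ i, ∑ j, α (P i) ^ 2 * (M i j * φ i * φ j)
        = α (P i) ^ 2 * φ i * (lam * φ i) := fun i => by
      rw [← heig' i, Finset.mul_sum]
      exact Finset.sum_congr rfl fun j _ => by ring
    simp only [this]
    calc ∑ i, α (P i) ^ 2 * φ i * (lam * φ i) = lam * ∑ i, x i ^ 2 := by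
          rw [Finset.mul_sum]
          exact Finset.sum_congr rfl fun i _ => by rw [hx]; ring
      _ = lam := by rw [hxunit, mul_one]
  have hB : ∑ i, ∑ j, α (P j) ^ 2 * (M i j * φ i * φ j) = lam := by
    rw [Finset.sum_comm]
    rw [← hA]
    exact Finset.sum_congr rfl fun i _ => Finset.sum_congr rfl fun j _ => by
      rw [hMs j i]; ring
  have key : x ⬝ᵥ M.mulVec x + (∑ i, ∑ j, F (i, j)) / 2 = lam := by
    have expand : x ⬝ᵥ M.mulVec x + (∑ i, ∑ j, F (i, j)) / 2
        = (∑ i, ∑ j, α (P i) ^ 2 * (M i j * φ i * φ j)) / 2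
          + (∑ i, ∑ j, α (P j) ^ 2 * (M i j * φ i * φ j)) / 2 := by
      rw [hdot]
      simp only [Finset.sum_div, ← Finset.sum_add_distrib]
      exact Finset.sum_congr rfl fun i _ => Finset.sum_congr rfl fun j _ => by
        simp only [hF]; rw [hx i, hx j]; ring
    rw [expand, hA, hB]; ring
  have : (∑ i, ∑ j, F (i, j)) / 2 = ∑ p ∈ Finset.univ.filter
      (fun p : Fin n × Fin n => p.1 < p.2 ∧ M p.1 p.2 ≠ 0), F p := by
    rw [hTfull]; ring
  linarith [key, this]
end

section
/- Fix 0 < q ≤ p < 1 and let A be the adjacency matrix of G ~ G(n,p,q). With probability tending to 1 as n → ∞, for every nowhere-zero vector φ ∈ ℝ^n, every subset S ⊆ [n] with |S| ≥ 3 log_{1/(1-q)} n contains a pair u ≠ v with A_{uv} φ(u) φ(v) < 0. Consequently, any partition of [n] into sets each of which satisfies A_{uv} φ(u) φ(v) ≥ 0 on all internal pairs has at least n / (3 log_{1/(1-q)} n) parts. -/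
open MeasureTheory ProbabilityTheory Finset Filter Topology
open scoped ENNReal

/-!
Put `m = ⌈3 log_{1/(1-q)} n⌉`. Call a set `T` of `m` vertices with a sign pattern `ε` on `T` bad
if no pair `u < v` of `T` has `X u v = -ε u ε v`. The `m.choose 2` pairs of `T` are independent and
each misses a prescribed value in `{1, -1}` with probability at most `1 - q`, so a union bound over
the at most `n ^ m * 2 ^ m` choices of `(T, ε)` shows that a bad one exists with probability at
most `a = n ^ m * 2 ^ m * (1 - q) ^ (m.choose 2)`; since `(1 - q) ^ m ≤ n⁻³`, we get
`a ^ 2 ≤ 4 / ((1 - q) n) → 0`. If there is no bad `(T, ε)`, then for a nowhere-zero `φ` and any `S`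
with at least `m` elements, the signs of `φ` on an `m`-subset of `S` exhibit a pair with
`X u v φ u φ v < 0`; so the classes of a partition as in the statement have fewer than
`3 log_{1/(1-q)} n` elements each.
-/

lemma ProbabilityTheory.iIndepFun.measure_biInter_preimage_le_pow {Ω ι : Type*}
    [MeasurableSpace Ω] {μ : Measure Ω} {β : ι → Type*} [∀ i, MeasurableSpace (β i)]
    {f : ∀ i, Ω → β i} (hf : iIndepFun f μ) {E : Finset ι} {B : ∀ i, Set (β i)}
    (hB : ∀ i ∈ E, MeasurableSet (B i)) {r : ℝ≥0∞} (hr : ∀ i ∈ E, μ (f i ⁻¹' B i) ≤ r) :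
    μ (⋂ i ∈ E, f i ⁻¹' B i) ≤ r ^ #E := by
  rw [hf.meas_biInter fun i hi => ⟨B i, hB i hi, rfl⟩]
  exact prod_le_pow_card E _ r hr

lemma measure_preimage_compl_singleton_le {Ω : Type*} [MeasurableSpace Ω] {μ : Measure Ω}
    [IsProbabilityMeasure μ] {Y : Ω → ℝ} (hY : Measurable Y) {p q : ℝ} (hqp : q ≤ p)
    (h1 : μ {ω | Y ω = 1} = ENNReal.ofReal p) (h2 : μ {ω | Y ω = -1} = ENNReal.ofReal q)
    {c : ℝ} (hc : c = 1 ∨ c = -1) : μ (Y ⁻¹' {c}ᶜ) ≤ 1 - ENNReal.ofReal q := by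
  rw [Set.preimage_compl, prob_compl_eq_one_sub (hY (measurableSet_singleton c))]
  gcongr
  rcases hc with rfl | rfl
  · exact h1 ▸ ENNReal.ofReal_le_ofReal hqp
  · exact h2.ge

lemma tendsto_measure_one_of_compl_subset {Ω : ℕ → Type*} [∀ n, MeasurableSpace (Ω n)]
    {μ : ∀ n, Measure (Ω n)} [∀ n, IsProbabilityMeasure (μ n)] {B G : ∀ n, Set (Ω n)}
    (hB : Tendsto (fun n => μ n (B n)) atTop (𝓝 0)) (hG : ∀ᶠ n in atTop, (B n)ᶜ ⊆ G n) :
    Tendsto (fun n => μ n (G n)) atTop (𝓝 1) := by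
  have hsub : Tendsto (fun n => 1 - μ n (B n)) atTop (𝓝 1) := by
    simpa using ENNReal.Tendsto.sub tendsto_const_nhds hB (Or.inl ENNReal.one_ne_top)
  refine tendsto_of_tendsto_of_tendsto_of_le_of_le' hsub tendsto_const_nhds ?_
    (Eventually.of_forall fun n => prob_le_one)
  filter_upwards [hG] with n hn
  calc 1 - μ n (B n) ≤ μ n (B n)ᶜ := by
        rw [tsub_le_iff_left, ← measure_univ (μ := μ n), ← Set.union_compl_self (B n)]
        exact measure_union_le _ _
    _ ≤ μ n (G n) := measure_mono hn

lemma card_le_mul_of_forall_exists_not {α β : Type*} [Fintype α] [Fintype β] [DecidableEq β]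
    {R : α → α → Prop} {L : ℝ}
    (hL : ∀ S : Finset α, L ≤ #S → ∃ u ∈ S, ∃ v ∈ S, u ≠ v ∧ ¬ R u v)
    (P : α → β) (hP : ∀ u v, u ≠ v → P u = P v → R u v) :
    (Fintype.card α : ℝ) ≤ Fintype.card β * L := by
  have hfiber : ∀ b, (#{u | P u = b} : ℝ) ≤ L := by
    intro b
    by_contra! h
    obtain ⟨u, hu, v, hv, huv, hR⟩ := hL _ h.le
    simp only [mem_filter, mem_univ, true_and] at hu hv
    exact hR (hP u v huv (hu.trans hv.symm))
  calc (Fintype.card α : ℝ) = ∑ b, (#{u | P u = b} : ℝ) := by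
        exact_mod_cast (card_eq_sum_card_fiberwise fun u _ => mem_univ (P u))
    _ ≤ Fintype.card β * L := by
        simpa using sum_le_card_nsmul univ _ L fun b _ => hfiber b

lemma rpow_mul_logb_one_div {r n : ℝ} (hr0 : 0 < r) (hr1 : r ≠ 1) (hn : 0 < n) (c : ℝ) :
    r ^ (c * Real.logb (1 / r) n) = (n ^ c)⁻¹ := by
  nth_rewrite 1 [show r = (1 / r)⁻¹ by simp]
  rw [Real.inv_rpow (by positivity), mul_comm, Real.rpow_mul (by positivity),
    Real.rpow_logb (by positivity) (by simpa using hr1) hn]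

lemma sq_pow_mul_pow_mul_pow_choose_two_le {r n : ℝ} (hr0 : 0 < r) (hr1 : r < 1)
    (hrn : 4 ≤ r * n) {m : ℕ} (hm : 3 * Real.logb (1 / r) n ≤ m) :
    (n ^ m * 2 ^ m * r ^ m.choose 2) ^ 2 ≤ 4 / (r * n) := by
  have hn : 1 < n := by nlinarith
  have hm1 : 1 ≤ m := by
    have : 0 < Real.logb (1 / r) n := Real.logb_pos (by rw [lt_div_iff₀ hr0]; linarith) hn
    have : (0 : ℝ) < m := by linarith
    exact_mod_cast this
  have hrm : r ^ m ≤ (n ^ 3)⁻¹ := by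
    have h3 := rpow_mul_logb_one_div hr0 hr1.ne (by linarith : 0 < n) 3
    norm_cast at h3
    rw [← h3, ← Real.rpow_natCast]
    exact Real.rpow_le_rpow_of_exponent_ge hr0 hr1.le hm
  set base := n ^ 2 * 2 ^ 2 * r ^ (m - 1)
  have hbase : base ≤ 4 / (r * n) := by
    have : r ^ (m - 1) * r = r ^ m := pow_sub_one_mul (by omega) r
    calc base = n ^ 2 * 2 ^ 2 * (r ^ m / r) := by rw [← this, mul_div_cancel_right₀ _ hr0.ne']
      _ ≤ n ^ 2 * 2 ^ 2 * ((n ^ 3)⁻¹ / r) := by gcongr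
      _ = 4 / (r * n) := by field_simp; norm_num
  have hsq : (n ^ m * 2 ^ m * r ^ m.choose 2) ^ 2 = base ^ m := by
    have h2 : m.choose 2 * 2 = (m - 1) * m := by
      rw [Nat.choose_two_right, Nat.div_two_mul_two_of_even m.even_mul_pred_self, mul_comm]
    simp only [base, mul_pow, ← pow_mul, h2]
    ring
  calc _ = base ^ m := hsq
    _ ≤ base ^ 1 := pow_le_pow_of_le_one (by positivity)
        (hbase.trans ((div_le_one (by positivity)).mpr (by linarith))) hm1
    _ ≤ 4 / (r * n) := (pow_one base).trans_le hbase

lemma tendsto_pow_mul_pow_mul_pow_choose_two {r : ℝ} (hr0 : 0 < r) (hr1 : r < 1) :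
    Tendsto (fun n : ℕ => (n : ℝ) ^ ⌈3 * Real.logb (1 / r) n⌉₊ * 2 ^ ⌈3 * Real.logb (1 / r) n⌉₊ *
      r ^ (⌈3 * Real.logb (1 / r) n⌉₊).choose 2) atTop (𝓝 0) := by
  have hlim : Tendsto (fun n : ℕ => √(4 / r / n)) atTop (𝓝 0) := by
    simpa using (tendsto_const_div_atTop_nhds_zero_nat (4 / r)).sqrt
  refine squeeze_zero' (Eventually.of_forall fun n => by positivity) ?_ hlim
  filter_upwards [eventually_ge_atTop ⌈4 / r⌉₊] with n hn
  rw [Real.le_sqrt (by positivity) (by positivity), div_div]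
  exact sq_pow_mul_pow_mul_pow_choose_two_le hr0 hr1
    (by rw [← div_le_iff₀' hr0]; exact Nat.ceil_le.mp hn) (Nat.le_ceil _)

section SignedPairs

variable {Ω V : Type*} [LinearOrder V]

-- A sign pattern on `T` is encoded by the set `A ⊆ T` of its positive vertices.
def signOn (A : Finset V) (u : V) : ℝ := if u ∈ A then 1 else -1

lemma neg_signOn_mul_signOn_eq (A : Finset V) (u v : V) :
    -(signOn A u * signOn A v) = 1 ∨ -(signOn A u * signOn A v) = -1 := by
  unfold signOn; split_ifs <;> norm_num

lemma signOn_filter_pos_mul_pos {T : Finset V} {φ : V → ℝ} {u : V} (hu : u ∈ T)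
    (hφ : φ u ≠ 0) : 0 < signOn {v ∈ T | 0 < φ v} u * φ u := by
  rcases hφ.lt_or_gt with h | h
  · simp [signOn, h.not_gt, h]
  · simp [signOn, hu, h]

def noNegativePair (X : V → V → Ω → ℝ) (T A : Finset V) : Set Ω :=
  ⋂ e ∈ (T ×ˢ T).subtype (fun e : V × V => e.1 < e.2),
    X e.1.1 e.1.2 ⁻¹' {-(signOn A e.1.1 * signOn A e.1.2)}ᶜ

lemma measure_noNegativePair_le [MeasurableSpace Ω] {μ : Measure Ω} [IsProbabilityMeasure μ]
    {p q : ℝ} (hqp : q ≤ p) {X : V → V → Ω → ℝ} (hmeas : ∀ u v, Measurable (X u v))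
    (hindep : iIndepFun (fun e : {e : V × V // e.1 < e.2} => X e.1.1 e.1.2) μ)
    (hdist : ∀ u v, u < v →
      μ {ω | X u v ω = 1} = ENNReal.ofReal p ∧ μ {ω | X u v ω = -1} = ENNReal.ofReal q)
    (T A : Finset V) :
    μ (noNegativePair X T A) ≤ (1 - ENNReal.ofReal q) ^ (#T).choose 2 := by
  rw [← card_product_filter_lt, ← card_subtype]
  refine hindep.measure_biInter_preimage_le_pow (fun e _ => (measurableSet_singleton _).compl)
    fun e _ => ?_
  obtain ⟨h1, h2⟩ := hdist _ _ e.2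
  exact measure_preimage_compl_singleton_le (hmeas _ _) hqp h1 h2 (neg_signOn_mul_signOn_eq _ _ _)

lemma exists_mul_mul_neg_of_notMem_noNegativePair {X : V → V → Ω → ℝ} {ω : Ω} {m : ℕ}
    (hω : ∀ T : Finset V, #T = m → ∀ A ⊆ T, ω ∉ noNegativePair X T A)
    {φ : V → ℝ} (hφ : ∀ u, φ u ≠ 0) {S : Finset V} (hS : m ≤ #S) :
    ∃ u ∈ S, ∃ v ∈ S, u ≠ v ∧ X u v ω * φ u * φ v < 0 := by
  obtain ⟨T, hTS, hT⟩ := exists_subset_card_eq hS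
  have hpair := hω T hT _ (filter_subset (fun v => 0 < φ v) T)
  simp only [noNegativePair, Set.mem_iInter, Set.mem_preimage, Set.mem_compl_iff,
    Set.mem_singleton_iff, not_forall, not_not] at hpair
  obtain ⟨⟨⟨u, v⟩, huv⟩, he, hX⟩ := hpair
  obtain ⟨hu, hv⟩ := mem_product.mp (mem_subtype.mp he)
  refine ⟨u, hTS hu, v, hTS hv, huv.ne, ?_⟩
  have hpos := mul_pos (signOn_filter_pos_mul_pos hu (hφ u)) (signOn_filter_pos_mul_pos hv (hφ v))
  rw [hX]
  linarith

lemma measure_biUnion_noNegativePair_le [Fintype V] [MeasurableSpace Ω] {μ : Measure Ω}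
    [IsProbabilityMeasure μ] {p q : ℝ} (hq : 0 ≤ q) (hqp : q ≤ p) (hq1 : q ≤ 1)
    {X : V → V → Ω → ℝ} (hmeas : ∀ u v, Measurable (X u v))
    (hindep : iIndepFun (fun e : {e : V × V // e.1 < e.2} => X e.1.1 e.1.2) μ)
    (hdist : ∀ u v, u < v →
      μ {ω | X u v ω = 1} = ENNReal.ofReal p ∧ μ {ω | X u v ω = -1} = ENNReal.ofReal q)
    (m : ℕ) :
    μ (⋃ T ∈ powersetCard m univ, ⋃ A ∈ T.powerset, noNegativePair X T A) ≤
      ENNReal.ofReal (Fintype.card V ^ m * 2 ^ m * (1 - q) ^ m.choose 2) := by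
  have hpair : ∀ T ∈ powersetCard m (univ : Finset V), ∀ A ∈ T.powerset,
      μ (noNegativePair X T A) ≤ ENNReal.ofReal ((1 - q) ^ m.choose 2) := by
    intro T hT A _
    rw [ENNReal.ofReal_pow (by linarith), ENNReal.ofReal_sub _ hq, ENNReal.ofReal_one,
      ← (mem_powersetCard_univ.mp hT)]
    exact measure_noNegativePair_le hqp hmeas hindep hdist T A
  calc μ (⋃ T ∈ powersetCard m univ, ⋃ A ∈ T.powerset, noNegativePair X T A)
      ≤ ∑ T ∈ powersetCard m univ, ∑ A ∈ T.powerset, μ (noNegativePair X T A) :=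
        (measure_biUnion_finset_le _ _).trans (sum_le_sum fun T _ => measure_biUnion_finset_le _ _)
    _ ≤ ∑ T ∈ powersetCard m univ, ∑ A ∈ T.powerset, ENNReal.ofReal ((1 - q) ^ m.choose 2) :=
        sum_le_sum fun T hT => sum_le_sum fun A hA => hpair T hT A hA
    _ = ENNReal.ofReal ((Fintype.card V).choose m * 2 ^ m * (1 - q) ^ m.choose 2) := by
        rw [sum_congr rfl fun T hT => by rw [sum_const, card_powerset, mem_powersetCard_univ.mp hT],
          sum_const, card_powersetCard, card_univ, ← smul_assoc, ENNReal.ofReal_mul (by positivity)]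
        simp
    _ ≤ ENNReal.ofReal (Fintype.card V ^ m * 2 ^ m * (1 - q) ^ m.choose 2) := by
        gcongr
        exact_mod_cast Nat.choose_le_pow _ _

end SignedPairs

theorem stmt13_general (p q : ℝ) (hq : 0 < q) (hqp : q ≤ p) (hp : p < 1)
    (Ω : ℕ → Type*) [∀ n, MeasurableSpace (Ω n)] (μ : ∀ n, Measure (Ω n))
    [∀ n, IsProbabilityMeasure (μ n)]
    (X : ∀ n, Fin n → Fin n → Ω n → ℝ)
    (hmeas : ∀ n u v, Measurable (X n u v))
    (hindep : ∀ n, iIndepFun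
      (fun e : {e : Fin n × Fin n // e.1 < e.2} => X n e.1.1 e.1.2) (μ n))
    (hdist : ∀ n, ∀ u v : Fin n, u ≠ v →
      μ n {ω | X n u v ω = 1} = ENNReal.ofReal p ∧
      μ n {ω | X n u v ω = -1} = ENNReal.ofReal q ∧
      μ n {ω | X n u v ω = 0} = ENNReal.ofReal (1 - p - q)) :
    Filter.Tendsto (fun n => μ n {ω | ∀ φ : Fin n → ℝ, (∀ i, φ i ≠ 0) →
        (∀ S : Finset (Fin n), 3 * Real.logb (1 / (1 - q)) n ≤ S.card →
          ∃ u ∈ S, ∃ v ∈ S, u ≠ v ∧ X n u v ω * φ u * φ v < 0) ∧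
        (∀ (s : ℕ) (P : Fin n → Fin s),
          (∀ u v, u ≠ v → P u = P v → 0 ≤ X n u v ω * φ u * φ v) →
          (n : ℝ) / (3 * Real.logb (1 / (1 - q)) n) ≤ s)})
      Filter.atTop (nhds 1) := by
  have hq1 : q < 1 := hqp.trans_lt hp
  set L : ℕ → ℝ := fun n => 3 * Real.logb (1 / (1 - q)) n
  refine tendsto_measure_one_of_compl_subset (B := fun n =>
    ⋃ T ∈ powersetCard ⌈L n⌉₊ univ, ⋃ A ∈ T.powerset, noNegativePair (X n) T A) ?_ ?_
  · refine tendsto_of_tendsto_of_tendsto_of_le_of_le tendsto_const_nhds ?_ (fun _ => zero_le)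
      fun n => measure_biUnion_noNegativePair_le hq.le hqp hq1.le (hmeas n) (hindep n)
        (fun u v huv => ⟨(hdist n u v huv.ne).1, (hdist n u v huv.ne).2.1⟩) ⌈L n⌉₊
    simpa only [Fintype.card_fin, ENNReal.ofReal_zero, Function.comp_def] using
      ENNReal.tendsto_ofReal
        (tendsto_pow_mul_pow_mul_pow_choose_two (sub_pos.2 hq1) (sub_lt_self 1 hq))
  · filter_upwards [eventually_ge_atTop 2] with n hn ω hω φ hφ
    have hneg : ∀ S : Finset (Fin n), L n ≤ #S →
        ∃ u ∈ S, ∃ v ∈ S, u ≠ v ∧ X n u v ω * φ u * φ v < 0 := fun S hS =>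
      exists_mul_mul_neg_of_notMem_noNegativePair (by simpa using hω) hφ (Nat.ceil_le.mpr hS)
    refine ⟨hneg, fun s P hP => ?_⟩
    have hL : 0 < L n := mul_pos three_pos (Real.logb_pos
      (by rw [lt_div_iff₀ (by linarith)]; linarith) (by exact_mod_cast hn))
    rw [div_le_iff₀ hL]
    simpa using card_le_mul_of_forall_exists_not (fun S hS => by
      obtain ⟨u, hu, v, hv, huv, h⟩ := hneg S hS
      exact ⟨u, hu, v, hv, huv, h.not_ge⟩) P hP

theorem stmt13 (p q : ℝ) (hq : 0 < q) (hqp : q ≤ p) (hp : p < 1) (hpq : p + q ≤ 1)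
    (Ω : ℕ → Type*) [∀ n, MeasurableSpace (Ω n)] (μ : ∀ n, Measure (Ω n))
    [∀ n, IsProbabilityMeasure (μ n)]
    (X : ∀ n, Fin n → Fin n → Ω n → ℝ)
    (hsym : ∀ n u v, X n u v = X n v u)
    (hmeas : ∀ n u v, Measurable (X n u v))
    (hindep : ∀ n, iIndepFun
      (fun e : {e : Fin n × Fin n // e.1 < e.2} => X n e.1.1 e.1.2) (μ n))
    (hdist : ∀ n, ∀ u v : Fin n, u ≠ v →
      μ n {ω | X n u v ω = 1} = ENNReal.ofReal p ∧
      μ n {ω | X n u v ω = -1} = ENNReal.ofReal q ∧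
      μ n {ω | X n u v ω = 0} = ENNReal.ofReal (1 - p - q)) :
    Filter.Tendsto (fun n => μ n {ω | ∀ φ : Fin n → ℝ, (∀ i, φ i ≠ 0) →
        (∀ S : Finset (Fin n), 3 * Real.logb (1 / (1 - q)) n ≤ S.card →
          ∃ u ∈ S, ∃ v ∈ S, u ≠ v ∧ X n u v ω * φ u * φ v < 0) ∧
        (∀ (s : ℕ) (P : Fin n → Fin s),
          (∀ u v, u ≠ v → P u = P v → 0 ≤ X n u v ω * φ u * φ v) →
          (n : ℝ) / (3 * Real.logb (1 / (1 - q)) n) ≤ s)})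
      Filter.atTop (nhds 1) :=
  stmt13_general p q hq hqp hp Ω μ X hmeas hindep hdist
end

section
/- Let M be a symmetric irreducible n×n matrix and φ a nowhere-zero eigenvector for eigenvalue λ of index k and multiplicity r. Let ν_+ (resp. ν_-) be the cyclomatic number of the subgraph of the graph of M on edges where M_{ij} φ(i) φ(j) > 0 (resp. < 0), and ν the cyclomatic number of the full graph of M. Then the number of connected components of the graph on [n] with edges {(i,j): M_{ij} φ(i)φ(j) < 0} is at least k + (r-1) - ν + ν_+ + ν_-. -/
open Matrix

/-- Cyclomatic number of a graph: `e - n + c` where `c` is the number of connected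
components. -/
noncomputable def cyclo {n : ℕ} (G : SimpleGraph (Fin n)) : ℤ :=
  (G.edgeSet.ncard : ℤ) - n + Nat.card G.ConnectedComponent

noncomputable def posGraph {n : ℕ} (M : Matrix (Fin n) (Fin n) ℝ) (φ : Fin n → ℝ) :
    SimpleGraph (Fin n) :=
  SimpleGraph.fromRel (fun i j => 0 < M i j * φ i * φ j)

noncomputable def negGraph {n : ℕ} (M : Matrix (Fin n) (Fin n) ℝ) (φ : Fin n → ℝ) :
    SimpleGraph (Fin n) :=
  SimpleGraph.fromRel (fun i j => M i j * φ i * φ j < 0)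

/-!
Since the graph of `M` is connected and is the edge-disjoint union of the positive and the
negative graph, unfolding the three cyclomatic numbers reduces the claim to
`c₊ + #{eigenvalues ≤ λ} ≤ n + 1`, where `c₊` is the number of components of the positive graph.

For `a` constant on the components of the positive graph, the ground-state identity
`⟪aφ, M(aφ)⟫ = λ‖aφ‖² - ½ ∑ᵢⱼ Mᵢⱼ φᵢ φⱼ (aᵢ - aⱼ)²` has only negative-edge terms on the right,
so `⟪x, Mx⟫ ≥ λ‖x‖²` on the `c₊`-dimensional space `W` of such vectors `x = aφ`, with equality
only if `a` is constant across every edge of the (connected) graph of `M`, i.e. `x ∈ ℝφ`.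
On the span `V` of the eigenvectors with eigenvalue `≤ λ` the reverse inequality holds. Hence
`W ⊓ V ≤ ℝφ`, and `dim W + dim V ≤ n + 1`.
-/

namespace Matrix

variable {ι R : Type*} [Fintype ι]

theorem two_mul_dotProduct_mulVec_mul_of_mulVec_eq_smul [CommRing R] {M : Matrix ι ι R}
    (hM : M.IsSymm) {φ : ι → R} {lam : R} (heig : M *ᵥ φ = lam • φ) (a : ι → R) :
    2 * ((a * φ) ⬝ᵥ M *ᵥ (a * φ))
      = 2 * lam * ((a * φ) ⬝ᵥ (a * φ)) - ∑ i, ∑ j, M i j * φ i * φ j * (a i - a j) ^ 2 := by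
  have hrow (i : ι) : ∑ j, M i j * φ i * φ j * a i ^ 2 = lam * (a i * φ i * (a i * φ i)) := by
    calc ∑ j, M i j * φ i * φ j * a i ^ 2 = (M *ᵥ φ) i * (φ i * a i ^ 2) := by
          simp only [mulVec, dotProduct, Finset.sum_mul]
          exact Finset.sum_congr rfl fun j _ => by ring
      _ = lam * (a i * φ i * (a i * φ i)) := by
          rw [heig, Pi.smul_apply, smul_eq_mul]; ring
  have hleft : ∑ i, ∑ j, M i j * φ i * φ j * a i ^ 2 = lam * ((a * φ) ⬝ᵥ (a * φ)) := by
    simp only [hrow, dotProduct, Pi.mul_apply, Finset.mul_sum]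
  have hright : ∑ i, ∑ j, M i j * φ i * φ j * a j ^ 2 = lam * ((a * φ) ⬝ᵥ (a * φ)) := by
    rw [Finset.sum_comm, ← hleft]
    exact Finset.sum_congr rfl fun i _ => Finset.sum_congr rfl fun j _ => by rw [hM.apply]; ring
  have hcross : (a * φ) ⬝ᵥ M *ᵥ (a * φ) = ∑ i, ∑ j, M i j * φ i * φ j * (a i * a j) := by
    simp only [dotProduct, mulVec, Pi.mul_apply, Finset.mul_sum]
    exact Finset.sum_congr rfl fun i _ => Finset.sum_congr rfl fun j _ => by ring
  have hexpand : ∑ i, ∑ j, M i j * φ i * φ j * (a i - a j) ^ 2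
      = ∑ i, ∑ j, M i j * φ i * φ j * a i ^ 2 + ∑ i, ∑ j, M i j * φ i * φ j * a j ^ 2
        - 2 * ∑ i, ∑ j, M i j * φ i * φ j * (a i * a j) := by
    simp only [Finset.mul_sum, ← Finset.sum_add_distrib, ← Finset.sum_sub_distrib]
    exact Finset.sum_congr rfl fun i _ => Finset.sum_congr rfl fun j _ => by ring
  rw [hexpand, hleft, hright, hcross]
  ring

theorem eq_of_dotProduct_mulVec_mul_le [CommRing R] [LinearOrder R] [IsStrictOrderedRing R]
    {M : Matrix ι ι R} (hM : M.IsSymm) {φ : ι → R} {lam : R} (heig : M *ᵥ φ = lam • φ)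
    {a : ι → R} (ha : ∀ i j, 0 < M i j * φ i * φ j → a i = a j)
    (hle : (a * φ) ⬝ᵥ M *ᵥ (a * φ) ≤ lam * ((a * φ) ⬝ᵥ (a * φ)))
    {i j : ι} (hij : M i j * φ i * φ j ≠ 0) : a i = a j := by
  have hterm (i j : ι) : M i j * φ i * φ j * (a i - a j) ^ 2 ≤ 0 := by
    rcases le_or_gt (M i j * φ i * φ j) 0 with hneg | hpos
    · exact mul_nonpos_of_nonpos_of_nonneg hneg (sq_nonneg _)
    · rw [ha i j hpos, sub_self, zero_pow two_ne_zero, mul_zero]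
  have hsum : ∑ i, ∑ j, M i j * φ i * φ j * (a i - a j) ^ 2 = 0 := by
    have := two_mul_dotProduct_mulVec_mul_of_mulVec_eq_smul hM heig a
    exact le_antisymm (Finset.sum_nonpos fun i _ => Finset.sum_nonpos fun j _ => hterm i j)
      (by linarith)
  have hzero := (Finset.sum_eq_zero_iff_of_nonpos fun j _ => hterm i j).1
    ((Finset.sum_eq_zero_iff_of_nonpos fun i _ =>
      Finset.sum_nonpos fun j _ => hterm i j).1 hsum i (Finset.mem_univ i)) j (Finset.mem_univ j)
  exact sub_eq_zero.1 (pow_eq_zero_iff two_ne_zero |>.1 ((mul_eq_zero.1 hzero).resolve_left hij))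

end Matrix

theorem LinearMap.IsSymmetric.inner_map_self_le_of_mem_span {ι E : Type*} [Fintype ι]
    [NormedAddCommGroup E] [InnerProductSpace ℝ E] {T : E →ₗ[ℝ] E} (hT : T.IsSymmetric)
    (b : OrthonormalBasis ι ℝ E) {μ : ι → ℝ} (hb : ∀ i, T (b i) = μ i • b i) {lam : ℝ} {x : E}
    (hx : x ∈ Submodule.span ℝ (b '' {i | μ i ≤ lam})) :
    inner ℝ x (T x) ≤ lam * inner ℝ x x := by
  have horth (j : ι) (hj : lam < μ j) : inner ℝ (b j) x = 0 := by
    refine Submodule.mem_orthogonal_singleton_iff_inner_right.1 (Submodule.span_le.2 ?_ hx)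
    rintro _ ⟨i, hi, rfl⟩
    refine Submodule.mem_orthogonal_singleton_iff_inner_right.2 (b.orthonormal.2 ?_)
    rintro rfl
    exact absurd hi (not_le.2 hj)
  have heig (j : ι) : inner ℝ (b j) (T x) = μ j * inner ℝ (b j) x := by
    rw [← hT, hb, real_inner_smul_left]
  calc inner ℝ x (T x) = ∑ j, μ j * inner ℝ (b j) x ^ 2 := by
        rw [← b.sum_inner_mul_inner]
        exact Finset.sum_congr rfl fun j _ => by rw [heig, real_inner_comm]; ring
    _ ≤ ∑ j, lam * inner ℝ (b j) x ^ 2 := by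
        refine Finset.sum_le_sum fun j _ => ?_
        rcases le_or_gt (μ j) lam with hle | hlt
        · exact mul_le_mul_of_nonneg_right hle (sq_nonneg _)
        · simp [horth j hlt]
    _ = lam * inner ℝ x x := by
        rw [← b.sum_inner_mul_inner, Finset.mul_sum]
        exact Finset.sum_congr rfl fun j _ => by rw [real_inner_comm]; ring

theorem SimpleGraph.Reachable.eq_of_forall_adj_eq {V β : Type*} {G : SimpleGraph V} {f : V → β}
    (hf : ∀ u v, G.Adj u v → f u = f v) {u v : V} (h : G.Reachable u v) : f u = f v := by
  obtain ⟨p⟩ := h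
  induction p with
  | nil => rfl
  | cons hadj _ ih => exact (hf _ _ hadj).trans ih

theorem Finset.card_filter_le_eq_card_filter_lt_add {ι α : Type*} [LinearOrder α] (s : Finset ι)
    (f : ι → α) (c : α) :
    (s.filter (f · ≤ c)).card = (s.filter (f · < c)).card + (s.filter (f · = c)).card := by
  classical
  rw [← card_union_of_disjoint (disjoint_filter.2 fun _ _ h => h.ne), ← filter_or]
  simp only [le_iff_lt_or_eq]

section SignGraphs

variable {n : ℕ} {M : Matrix (Fin n) (Fin n) ℝ} {φ : Fin n → ℝ} {i j : Fin n}

theorem graphOf_adj (hM : M.IsSymm) : (graphOf M).Adj i j ↔ i ≠ j ∧ M i j ≠ 0 := by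
  simp only [graphOf, SimpleGraph.fromRel_adj, hM.apply i j, or_self]

theorem posGraph_adj (hM : M.IsSymm) : (posGraph M φ).Adj i j ↔ i ≠ j ∧ 0 < M i j * φ i * φ j := by
  simp only [posGraph, SimpleGraph.fromRel_adj, hM.apply i j, mul_right_comm _ (φ j), or_self]

theorem negGraph_adj (hM : M.IsSymm) : (negGraph M φ).Adj i j ↔ i ≠ j ∧ M i j * φ i * φ j < 0 := by
  simp only [negGraph, SimpleGraph.fromRel_adj, hM.apply i j, mul_right_comm _ (φ j), or_self]

theorem graphOf_eq_posGraph_sup_negGraph (hM : M.IsSymm) (hφ : ∀ i, φ i ≠ 0) :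
    graphOf M = posGraph M φ ⊔ negGraph M φ := by
  ext i j
  rw [SimpleGraph.sup_adj, graphOf_adj hM, posGraph_adj hM, negGraph_adj hM, ← and_or_left,
    or_comm, lt_or_lt_iff_ne, mul_ne_zero_iff, mul_ne_zero_iff]
  simp only [hφ, ne_eq, not_false_eq_true, and_true]

theorem disjoint_posGraph_negGraph (hM : M.IsSymm) : Disjoint (posGraph M φ) (negGraph M φ) := by
  refine disjoint_iff_inf_le.2 fun i j ⟨hpos, hneg⟩ => ?_
  exact lt_asymm ((posGraph_adj hM).1 hpos).2 ((negGraph_adj hM).1 hneg).2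

end SignGraphs

theorem cyclo_eq_of_connected {n : ℕ} {G : SimpleGraph (Fin n)} (hG : G.Connected) :
    cyclo G = (G.edgeSet.ncard : ℤ) - n + 1 := by
  have := hG.preconnected.subsingleton_connectedComponent
  have := hG.nonempty.map G.connectedComponentMk
  rw [cyclo, Nat.card_eq_one_iff_unique.2 ⟨‹_›, ‹_›⟩, Nat.cast_one]

theorem apply_eq_of_posGraph_adj_of_dotProduct_mulVec_le {n : ℕ} {M : Matrix (Fin n) (Fin n) ℝ}
    (hM : M.IsSymm) (hirr : (graphOf M).Connected) {lam : ℝ} {φ : Fin n → ℝ}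
    (hφ : ∀ i, φ i ≠ 0) (heig : M *ᵥ φ = lam • φ) {a : Fin n → ℝ}
    (ha : ∀ i j, (posGraph M φ).Adj i j → a i = a j)
    (hle : (a * φ) ⬝ᵥ M *ᵥ (a * φ) ≤ lam * ((a * φ) ⬝ᵥ (a * φ))) (i j : Fin n) : a i = a j := by
  refine (hirr.preconnected i j).eq_of_forall_adj_eq fun u v huv => ?_
  refine Matrix.eq_of_dotProduct_mulVec_mul_le hM heig (fun u v hpos => ?_) hle
    (mul_ne_zero (mul_ne_zero ((graphOf_adj hM).1 huv).2 (hφ u)) (hφ v))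
  obtain rfl | huv := eq_or_ne u v
  · rfl
  · exact ha u v ((posGraph_adj hM).2 ⟨huv, hpos⟩)

theorem OrthonormalBasis.finrank_span_image_setOf {ι 𝕜 E : Type*} [Fintype ι] [RCLike 𝕜]
    [NormedAddCommGroup E] [InnerProductSpace 𝕜 E] (b : OrthonormalBasis ι 𝕜 E) (p : ι → Prop)
    [DecidablePred p] :
    Module.finrank 𝕜 (Submodule.span 𝕜 (b '' {i | p i})) = (Finset.univ.filter p).card := by
  rw [Set.image_eq_range]
  exact (finrank_span_eq_card (b.orthonormal.linearIndependent.comp _ Subtype.val_injective)).trans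
    (by simp [Fintype.card_subtype])

theorem Matrix.IsHermitian.toEuclideanLin_eigenvectorBasis {ι : Type*} [Fintype ι]
    [DecidableEq ι] {M : Matrix ι ι ℝ} (hM : M.IsHermitian) (j : ι) :
    toEuclideanLin M (hM.eigenvectorBasis j) = hM.eigenvalues j • hM.eigenvectorBasis j := by
  ext i
  simpa using congrFun (hM.mulVec_eigenvectorBasis j) i

theorem card_connectedComponent_posGraph_add_card_le {n : ℕ} {M : Matrix (Fin n) (Fin n) ℝ}
    (hM : M.IsHermitian) (hirr : (graphOf M).Connected) {lam : ℝ} {φ : Fin n → ℝ}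
    (hφ : ∀ i, φ i ≠ 0) (heig : M *ᵥ φ = lam • φ) :
    Nat.card (posGraph M φ).ConnectedComponent
      + (Finset.univ.filter (fun i => hM.eigenvalues i ≤ lam)).card ≤ n + 1 := by
  classical
  set Q := (posGraph M φ).connectedComponentMk
  let T : ((posGraph M φ).ConnectedComponent → ℝ) →ₗ[ℝ] EuclideanSpace ℝ (Fin n) :=
    (WithLp.linearEquiv 2 ℝ (Fin n → ℝ)).symm.toLinearMap ∘ₗ LinearMap.mulRight ℝ φ ∘ₗ
      LinearMap.funLeft ℝ ℝ Q
  have hT : Function.Injective T :=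
    (WithLp.linearEquiv 2 ℝ (Fin n → ℝ)).symm.injective.comp <|
      (Pi.isUnit_iff.2 fun i => (hφ i).isUnit).mul_left_injective.comp <|
        LinearMap.funLeft_injective_of_surjective _ _ Q Quot.mk_surjective
  set V := Submodule.span ℝ (hM.eigenvectorBasis '' {i | hM.eigenvalues i ≤ lam})
  have hWV : LinearMap.range T ⊓ V ≤ ℝ ∙ WithLp.toLp 2 φ := by
    rintro _ ⟨⟨a, rfl⟩, hxV⟩
    -- the inner product of `EuclideanSpace` is definitionally the dot product
    have hle : ((a ∘ Q) * φ) ⬝ᵥ M *ᵥ ((a ∘ Q) * φ) ≤ lam * (((a ∘ Q) * φ) ⬝ᵥ ((a ∘ Q) * φ)) := by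
      rw [dotProduct_comm]
      exact (isSymmetric_toEuclideanLin_iff.2 hM).inner_map_self_le_of_mem_span
        hM.eigenvectorBasis hM.toEuclideanLin_eigenvectorBasis hxV
    have hconst := apply_eq_of_posGraph_adj_of_dotProduct_mulVec_le
      (isHermitian_iff_isSymm.1 hM) hirr hφ heig
      (fun _ _ hij => congrArg a (SimpleGraph.ConnectedComponent.connectedComponentMk_eq_of_adj hij))
      hle
    obtain ⟨i₀⟩ := hirr.nonempty
    refine Submodule.mem_span_singleton.2 ⟨a (Q i₀), ?_⟩
    ext i
    change a (Q i₀) * φ i = a (Q i) * φ i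
    rw [hconst i₀ i]
  have hdim := Submodule.finrank_sup_add_finrank_inf_eq (LinearMap.range T) V
  have hsup := Submodule.finrank_le (LinearMap.range T ⊔ V)
  have hinf := (Submodule.finrank_mono hWV).trans (finrank_span_le_card _)
  rw [LinearMap.finrank_range_of_inj hT, Module.finrank_fintype_fun_eq_card,
    hM.eigenvectorBasis.finrank_span_image_setOf] at hdim
  rw [finrank_euclideanSpace_fin] at hsup
  simp only [Set.toFinset_singleton, Finset.card_singleton] at hinf
  rw [Nat.card_eq_fintype_card]
  omega

theorem stmt18_general {n : ℕ} {M : Matrix (Fin n) (Fin n) ℝ}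
    (hM : M.IsHermitian) (hirr : (graphOf M).Connected)
    (lam : ℝ) (φ : Fin n → ℝ) (hφ : ∀ i, φ i ≠ 0)
    (heig : M.mulVec φ = lam • φ)
    (k r : ℕ)
    (hk : k = (Finset.univ.filter (fun i => hM.eigenvalues i < lam)).card + 1)
    (hr : r = (Finset.univ.filter (fun i => hM.eigenvalues i = lam)).card) :
    (k : ℤ) + ((r : ℤ) - 1) - cyclo (graphOf M)
        + cyclo (posGraph M φ) + cyclo (negGraph M φ)
      ≤ Nat.card (negGraph M φ).ConnectedComponent := by
  have hMs : M.IsSymm := isHermitian_iff_isSymm.1 hM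
  have hedges : (graphOf M).edgeSet.ncard
      = (posGraph M φ).edgeSet.ncard + (negGraph M φ).edgeSet.ncard := by
    rw [graphOf_eq_posGraph_sup_negGraph hMs hφ, SimpleGraph.edgeSet_sup,
      Set.ncard_union_eq (SimpleGraph.disjoint_edgeSet.2 (disjoint_posGraph_negGraph hMs))]
  have hcount := card_connectedComponent_posGraph_add_card_le hM hirr hφ heig
  rw [Finset.card_filter_le_eq_card_filter_lt_add, ← hr] at hcount
  rw [cyclo_eq_of_connected hirr, cyclo, cyclo, hedges]
  push_cast
  omega

theorem stmt18 {n : ℕ} (hn : 0 < n) {M : Matrix (Fin n) (Fin n) ℝ}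
    (hM : M.IsHermitian) (hirr : (graphOf M).Connected)
    (lam : ℝ) (φ : Fin n → ℝ) (hφ : ∀ i, φ i ≠ 0)
    (heig : M.mulVec φ = lam • φ)
    (k r : ℕ)
    (hk : k = (Finset.univ.filter (fun i => hM.eigenvalues i < lam)).card + 1)
    (hr : r = (Finset.univ.filter (fun i => hM.eigenvalues i = lam)).card) :
    (k : ℤ) + ((r : ℤ) - 1) - cyclo (graphOf M)
        + cyclo (posGraph M φ) + cyclo (negGraph M φ)
      ≤ Nat.card (negGraph M φ).ConnectedComponent :=
  stmt18_general hM hirr lam φ hφ heig k r hk hr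
end
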